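/- Let n, Δ ≥ 2, let (T, r) be a rooted tree on n vertices with Δ(T) ≤ Δ, and let n₀ ∈ ℕ with n ≤ n₀ < n⁴. Then there exist pairwise vertex-disjoint rooted subtrees (T_1, t_1),...,(T_k, t_k) of T such that, setting n_i := n₀ - |T_1 ∪ ... ∪ T_i| + 1: (i) V(T) = ∪_{i=1}^k V(T_i); (ii) T_i ⊆ T(t_i) for every i; (iii) the depth of t_1,...,t_k is non-decreasing; and (iv) n_{i-1}^{1/4} ≤ |T_i| ≤ (5/2)·Δ·n_{i-1}^{1/4} for every i ∈ [k]. -/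

import Mathlib

/-!
Cut the tree from the bottom. Let `A` be the vertex set still to be partitioned (a subtree
containing `r`) and `B = n₀ + 1 - |A|`; the pieces of `A` are listed first, so the last of them,
`P`, has `n_{i-1} = B + |P|`. If `|A| ≤ (5/2) Δ (n₀ + 1)^{1/4}`, then `A` is a single piece.
Otherwise take a deepest vertex `v` whose subtree `P = T_A(v)` has more than `c = ⌈B^{1/4}⌉`
vertices. Its child subtrees have at most `c` vertices each, so `B^{1/4} < |P| ≤ 1 + (Δ - 1) c`.
This gives the bounds on `|P|` and leaves at least `(n₀ + 1)^{1/4}` vertices in `A \ P`, so the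
recursion can go on. Partition `A \ P` recursively and append `P`. The roots of the earlier
pieces are `r` or have subtrees of more than `c` vertices, so they are no deeper than `v`.
-/

open Finset

lemma Fin.monotone_snoc {α : Type*} [Preorder α] {k : ℕ} {f : Fin k → α} {x : α}
    (hf : Monotone f) (hx : ∀ i, f i ≤ x) : Monotone (Fin.snoc f x : Fin (k + 1) → α) := by
  intro i j hij
  induction j using Fin.lastCases with
  | last =>
    induction i using Fin.lastCases with
    | last => exact le_rfl
    | cast i => simpa using hx i
  | cast j =>
    obtain ⟨i, rfl⟩ := Fin.exists_castSucc_eq.2 (hij.trans_lt (Fin.castSucc_lt_last j)).ne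
    simpa using hf (Fin.castSucc_le_castSucc_iff.1 hij)

section

variable {V : Type*} {par : V → V} {r : V} {A : Finset V} {v w : V}

section Tree

open Classical in
noncomputable def subtreeIn (par : V → V) (A : Finset V) (v : V) : Finset V :=
  {w ∈ A | ∃ j, par^[j] w = v}

def ParentClosed (par : V → V) (A : Finset V) : Prop :=
  ∀ v ∈ A, par v ∈ A

lemma mem_subtreeIn : w ∈ subtreeIn par A v ↔ w ∈ A ∧ ∃ j, par^[j] w = v := by
  classical
  simp [subtreeIn]

lemma subtreeIn_subset (A : Finset V) (v : V) : subtreeIn par A v ⊆ A :=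
  fun _ hw => (mem_subtreeIn.1 hw).1

lemma subtreeIn_mono {A' : Finset V} (h : A' ⊆ A) (v : V) :
    subtreeIn par A' v ⊆ subtreeIn par A v := by
  intro w hw
  rw [mem_subtreeIn] at hw ⊢
  exact ⟨h hw.1, hw.2⟩

lemma subtreeIn_root (hacyc : ∀ v : V, ∃ j, par^[j] v = r) (A : Finset V) :
    subtreeIn par A r = A := by
  ext w
  simp [mem_subtreeIn, hacyc w]

lemma ParentClosed.iterate_mem (hA : ParentClosed par A) (hv : v ∈ A) (j : ℕ) :
    par^[j] v ∈ A := by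
  induction j generalizing v with
  | zero => exact hv
  | succ j ih => exact ih (hA v hv)

lemma ParentClosed.mem_of_mem_subtreeIn (hA : ParentClosed par A) (hw : w ∈ subtreeIn par A v) :
    v ∈ A := by
  obtain ⟨hwA, j, rfl⟩ := mem_subtreeIn.1 hw
  exact hA.iterate_mem hwA j

lemma ParentClosed.sdiff_subtreeIn [DecidableEq V] (hA : ParentClosed par A) (v : V) :
    ParentClosed par (A \ subtreeIn par A v) := by
  intro w hw
  simp only [mem_sdiff, mem_subtreeIn, not_and, not_exists] at hw ⊢
  refine ⟨hA w hw.1, fun _ j hj => hw.2 hw.1 (j + 1) hj⟩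

end Tree

section Children

variable [Fintype V] [DecidableEq V]

def children (par : V → V) (v : V) : Finset V :=
  {u | u ≠ v ∧ par u = v}

lemma mem_children {u : V} : u ∈ children par v ↔ u ≠ v ∧ par u = v := by
  simp [children]

lemma exists_mem_children_iterate_eq (hne : w ≠ v) {j : ℕ} (hj : par^[j] w = v) :
    ∃ u ∈ children par v, ∃ i, par^[i] w = u := by
  induction j generalizing w with
  | zero => exact absurd hj hne
  | succ j ih =>
    by_cases hpar : par w = v
    · exact ⟨w, mem_children.2 ⟨hne, hpar⟩, 0, rfl⟩
    · obtain ⟨u, hu, i, hi⟩ := ih hpar hj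
      exact ⟨u, hu, i + 1, hi⟩

lemma card_subtreeIn_le {c : ℕ} (h : ∀ u ∈ children par v, #(subtreeIn par A u) ≤ c) :
    #(subtreeIn par A v) ≤ 1 + #(children par v) * c := by
  have hsub : subtreeIn par A v ⊆ insert v ((children par v).biUnion (subtreeIn par A)) := by
    intro w hw
    obtain ⟨hwA, j, hj⟩ := mem_subtreeIn.1 hw
    rcases eq_or_ne w v with rfl | hne
    · exact mem_insert_self _ _
    · obtain ⟨u, hu, i, hi⟩ := exists_mem_children_iterate_eq hne hj
      exact mem_insert_of_mem (mem_biUnion.2 ⟨u, hu, mem_subtreeIn.2 ⟨hwA, i, hi⟩⟩)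
  calc #(subtreeIn par A v)
      ≤ #(insert v ((children par v).biUnion (subtreeIn par A))) := card_le_card hsub
    _ ≤ 1 + #((children par v).biUnion (subtreeIn par A)) := by
      rw [add_comm]; exact card_insert_le _ _
    _ ≤ 1 + ∑ u ∈ children par v, #(subtreeIn par A u) := by gcongr; exact card_biUnion_le
    _ ≤ 1 + #(children par v) * c := by gcongr; simpa using sum_le_card_nsmul _ _ _ h

lemma card_subtreeIn_add_le {Δ c : ℕ}
    (hdeg : #(children par v) + (if v = r then 0 else 1) ≤ Δ)
    (h : ∀ u ∈ children par v, #(subtreeIn par A u) ≤ c) :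
    #(subtreeIn par A v) + (if v = r then 0 else c) ≤ 1 + Δ * c := by
  have hsub := card_subtreeIn_le h
  have hmul := Nat.mul_le_mul_right c hdeg
  split_ifs at hmul ⊢ <;> nlinarith

end Children

section Depth

variable [DecidableEq V] (hacyc : ∀ v : V, ∃ j, par^[j] v = r)

def depth (v : V) : ℕ :=
  Nat.find (hacyc v)

lemma depth_root : depth hacyc r = 0 :=
  (Nat.find_eq_zero _).2 rfl

lemma depth_par_lt {u : V} (hu : u ≠ r) : depth hacyc (par u) < depth hacyc u := by
  have hspec : par^[depth hacyc u] u = r := Nat.find_spec (hacyc u)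
  have hpos : depth hacyc u ≠ 0 := by
    intro h0
    rw [h0] at hspec
    exact hu hspec
  have : depth hacyc (par u) ≤ depth hacyc u - 1 := by
    refine Nat.find_le ?_
    rwa [← Function.iterate_succ_apply, Nat.succ_eq_add_one, Nat.sub_add_cancel (by omega)]
  omega

variable [Fintype V]

lemma exists_cut_vertex (hroot : par r = r) (hA : ParentClosed par A) (hr : r ∈ A) {c : ℕ}
    (hc : c < #A) :
    ∃ v ∈ A, c < #(subtreeIn par A v) ∧
      (∀ u ∈ children par v, #(subtreeIn par A u) ≤ c) ∧
      ∀ w, c < #(subtreeIn par A w) → depth hacyc w ≤ depth hacyc v := by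
  obtain ⟨v, hvC, hvmax⟩ := exists_max_image ({w | c < #(subtreeIn par A w)} : Finset V)
    (depth hacyc) ⟨r, by simpa [subtreeIn_root hacyc] using hc⟩
  have hv : c < #(subtreeIn par A v) := (mem_filter.1 hvC).2
  obtain ⟨w, hw⟩ := card_pos.1 (c.zero_le.trans_lt hv)
  refine ⟨v, hA.mem_of_mem_subtreeIn hw, hv, fun u hu => ?_, fun w hw => hvmax w (by simpa)⟩
  obtain ⟨huv, rfl⟩ := mem_children.1 hu
  by_contra! hlarge
  have hur : u ≠ r := by
    rintro rfl
    exact huv hroot.symm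
  have := hvmax u (by simpa using hlarge)
  have := depth_par_lt hacyc hur
  omega

end Depth

section Partition

def IsRootedPiece (par : V → V) (P : Finset V) (v : V) : Prop :=
  v ∈ P ∧ (∀ w ∈ P, w ≠ v → par w ∈ P) ∧ ∀ w ∈ P, ∃ j, par^[j] w = v

lemma ParentClosed.isRootedPiece_subtreeIn (hA : ParentClosed par A) (hv : v ∈ A) :
    IsRootedPiece par (subtreeIn par A v) v := by
  refine ⟨mem_subtreeIn.2 ⟨hv, 0, rfl⟩, fun w hw hne => ?_,
    fun w hw => (mem_subtreeIn.1 hw).2⟩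
  obtain ⟨hwA, j, hj⟩ := mem_subtreeIn.1 hw
  refine mem_subtreeIn.2 ⟨hA w hwA, j - 1, ?_⟩
  obtain _ | j := j
  · exact absurd hj hne
  · simpa using hj

structure IsRootedPartition (par : V → V) (A : Finset V) {k : ℕ} (S : Fin k → Finset V)
    (t : Fin k → V) : Prop where
  subset : ∀ i, S i ⊆ A
  cover : ∀ v ∈ A, ∃ i, v ∈ S i
  disjoint : ∀ i j, i ≠ j → Disjoint (S i) (S j)
  piece : ∀ i, IsRootedPiece par (S i) (t i)

lemma isRootedPartition_single (h : IsRootedPiece par A v) :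
    IsRootedPartition par A (fun _ : Fin 1 => A) (fun _ => v) where
  subset _ := subset_rfl
  cover _ hw := ⟨0, hw⟩
  disjoint i j hij := absurd (Subsingleton.elim i j) hij
  piece _ := h

variable {k : ℕ} {S : Fin k → Finset V} {t : Fin k → V}

lemma IsRootedPartition.sum_card [DecidableEq V] (h : IsRootedPartition par A S t) :
    ∑ i, #(S i) = #A := by
  rw [← card_biUnion fun i _ j _ hij => h.disjoint i j hij]
  congr
  ext w
  simpa using ⟨fun ⟨i, hi⟩ => h.subset i hi, h.cover w⟩

lemma IsRootedPartition.snoc [DecidableEq V] {P : Finset V}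
    (h : IsRootedPartition par (A \ P) S t) (hPA : P ⊆ A) (hP : IsRootedPiece par P v) :
    IsRootedPartition par A (Fin.snoc S P : Fin (k + 1) → Finset V) (Fin.snoc t v) where
  subset := Fin.forall_fin_succ'.2 ⟨by simpa using fun i => (h.subset i).trans sdiff_subset,
    by simpa using hPA⟩
  cover w hw := by
    by_cases hwP : w ∈ P
    · exact ⟨Fin.last k, by simpa using hwP⟩
    · obtain ⟨i, hi⟩ := h.cover w (mem_sdiff.2 ⟨hw, hwP⟩)
      exact ⟨i.castSucc, by simpa using hi⟩
  disjoint := by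
    have hlast : ∀ i, Disjoint (S i) P := fun i =>
      disjoint_left.2 fun w hw => (mem_sdiff.1 (h.subset i hw)).2
    refine Fin.forall_fin_succ'.2
      ⟨fun i => Fin.forall_fin_succ'.2 ⟨fun j hij => ?_, ?_⟩, ?_⟩
    · simpa using h.disjoint i j (by simpa using hij)
    · simpa using hlast i
    · exact Fin.forall_fin_succ'.2 ⟨fun j _ => by simpa using (hlast j).symm, by simp⟩
  piece := Fin.forall_fin_succ'.2 ⟨by simpa using h.piece, by simpa using hP⟩

end Partition

section Quarter

lemma rpow_quarter_le_iff {x y : ℝ} (hx : 0 ≤ x) (hy : 0 ≤ y) :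
    x ^ ((1 : ℝ) / 4) ≤ y ↔ x ≤ y ^ 4 := by
  rw [one_div, Real.rpow_inv_le_iff_of_pos hx hy (by norm_num)]
  norm_cast

lemma one_le_rpow_quarter {x : ℝ} (hx : 1 ≤ x) : 1 ≤ x ^ ((1 : ℝ) / 4) :=
  Real.one_le_rpow hx (by norm_num)

lemma rpow_quarter_le_rpow_quarter {x y : ℝ} (hx : 0 ≤ x) (hxy : x ≤ y) :
    x ^ ((1 : ℝ) / 4) ≤ y ^ ((1 : ℝ) / 4) :=
  Real.rpow_le_rpow hx hxy (by norm_num)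

noncomputable def cutSize (B : ℕ) : ℕ :=
  ⌈(B : ℝ) ^ ((1 : ℝ) / 4)⌉₊

lemma cutSize_mono : Monotone cutSize := fun _ _ h =>
  Nat.ceil_mono (rpow_quarter_le_rpow_quarter (by positivity) (by exact_mod_cast h))

lemma rpow_quarter_le_cutSize (B : ℕ) : (B : ℝ) ^ ((1 : ℝ) / 4) ≤ cutSize B :=
  Nat.le_ceil _

lemma cutSize_lt (B : ℕ) : (cutSize B : ℝ) < (B : ℝ) ^ ((1 : ℝ) / 4) + 1 :=
  Nat.ceil_lt_add_one (by positivity)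

-- The source of the constant `5/2`.
lemma one_add_mul_cutSize_lt {Δ B : ℕ} (hΔ : 2 ≤ Δ) (hB : 1 ≤ B) :
    1 + Δ * (cutSize B : ℝ) < 5 / 2 * Δ * (B : ℝ) ^ ((1 : ℝ) / 4) := by
  have ha := one_le_rpow_quarter (x := B) (by exact_mod_cast hB)
  have hc := cutSize_lt B
  have hΔ' : (2 : ℝ) ≤ Δ := by exact_mod_cast hΔ
  nlinarith

lemma one_add_pred_mul_cutSize_add_le {Δ B : ℕ} (hΔ : 1 ≤ Δ) {m : ℝ} (hm : 1 ≤ m)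
    (hBm : (B : ℝ) ^ ((1 : ℝ) / 4) ≤ m) :
    1 + (Δ - 1) * (cutSize B : ℝ) + m ≤ 5 / 2 * Δ * m := by
  have hc := cutSize_lt B
  have hΔ' : (1 : ℝ) ≤ Δ := by exact_mod_cast hΔ
  nlinarith

lemma rpow_quarter_le_and_le_of_cutSize_lt {Δ B s : ℕ} (hΔ : 2 ≤ Δ) (hB : 1 ≤ B)
    (hlo : cutSize B < s) (hhi : s ≤ 1 + Δ * cutSize B) :
    ((B : ℝ) + s) ^ ((1 : ℝ) / 4) ≤ s ∧
      (s : ℝ) ≤ 5 / 2 * Δ * ((B : ℝ) + s) ^ ((1 : ℝ) / 4) := by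
  set a := (B : ℝ) ^ ((1 : ℝ) / 4)
  have ha : 1 ≤ a := one_le_rpow_quarter (by exact_mod_cast hB)
  have ha4 : a ^ 4 = B := by
    rw [← Real.rpow_natCast, ← Real.rpow_mul (by positivity)]
    norm_num
  have hs : a + 1 ≤ s := by
    have := rpow_quarter_le_cutSize B
    have : (cutSize B : ℝ) + 1 ≤ s := by exact_mod_cast hlo
    linarith
  constructor
  · rw [rpow_quarter_le_iff (by positivity) (by positivity)]
    have h3 : a ^ 3 + 1 ≤ (s : ℝ) ^ 3 := by nlinarith [pow_le_pow_left₀ (by linarith) hs 3]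
    calc (B : ℝ) + s = a * a ^ 3 + s := by rw [← ha4]; ring
      _ ≤ s * a ^ 3 + s := by gcongr; linarith
      _ ≤ s * s ^ 3 := by nlinarith
      _ = s ^ 4 := by ring
  · have h := one_add_mul_cutSize_lt hΔ hB
    have hle : a ≤ ((B : ℝ) + s) ^ ((1 : ℝ) / 4) :=
      rpow_quarter_le_rpow_quarter (by positivity) (by linarith)
    have hhi' : (s : ℝ) ≤ 1 + Δ * cutSize B := by exact_mod_cast hhi
    nlinarith

end Quarter

/-- `remaining (n₀ + 1) S i` is the paper's `n_{i-1}`. -/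
def remaining (M : ℕ) {k : ℕ} (S : Fin k → Finset V) (i : Fin k) : ℝ :=
  M - ∑ j ∈ Iio i, (#(S j) : ℝ)

lemma remaining_snoc_castSucc (M : ℕ) {k : ℕ} (S : Fin k → Finset V) (P : Finset V)
    (i : Fin k) :
    remaining M (Fin.snoc S P : Fin (k + 1) → Finset V) i.castSucc = remaining M S i := by
  simp [remaining, Fin.sum_Iio_castSucc]

lemma remaining_snoc_last (M : ℕ) {k : ℕ} (S : Fin k → Finset V) (P : Finset V) :
    remaining M (Fin.snoc S P : Fin (k + 1) → Finset V) (Fin.last k) =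
      M - ∑ i, (#(S i) : ℝ) := by
  simp [remaining, Fin.Iio_last_eq_map]

section QuarterPartition

variable [DecidableEq V] (hacyc : ∀ v : V, ∃ j, par^[j] v = r)

structure IsQuarterPartition (Δ M : ℕ) (A : Finset V) {k : ℕ} (S : Fin k → Finset V)
    (t : Fin k → V) : Prop extends IsRootedPartition par A S t where
  depth_mono : Monotone (depth hacyc ∘ t)
  root_or_large : ∀ i, t i = r ∨ cutSize (M - #A) < #(subtreeIn par A (t i))
  card_bounds : ∀ i, remaining M S i ^ ((1 : ℝ) / 4) ≤ #(S i) ∧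
    (#(S i) : ℝ) ≤ 5 / 2 * Δ * remaining M S i ^ ((1 : ℝ) / 4)

variable {Δ M : ℕ}

lemma isQuarterPartition_single (hA : ParentClosed par A) (hr : r ∈ A) (hM : M ≤ #A ^ 4)
    (hsmall : (#A : ℝ) ≤ 5 / 2 * Δ * (M : ℝ) ^ ((1 : ℝ) / 4)) :
    IsQuarterPartition hacyc Δ M A (fun _ : Fin 1 => A) (fun _ => r) where
  toIsRootedPartition := isRootedPartition_single <| by
    simpa [subtreeIn_root hacyc] using hA.isRootedPiece_subtreeIn hr
  depth_mono _ _ _ := le_rfl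
  root_or_large _ := .inl rfl
  card_bounds i := by
    have hIio : Iio i = ∅ := Iio_eq_empty.2 fun j _ => (Subsingleton.elim i j).le
    simp only [remaining, hIio, sum_empty, sub_zero]
    refine ⟨(rpow_quarter_le_iff (by positivity) (by positivity)).2 ?_, hsmall⟩
    exact_mod_cast hM

lemma IsQuarterPartition.snoc {k : ℕ} {S : Fin k → Finset V} {t : Fin k → V}
    (h : IsQuarterPartition hacyc Δ M (A \ subtreeIn par A v) S t) (hA : ParentClosed par A)
    (hv : v ∈ A) (hlarge : cutSize (M - #A) < #(subtreeIn par A v))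
    (hdeepest : ∀ w, cutSize (M - #A) < #(subtreeIn par A w) → depth hacyc w ≤ depth hacyc v)
    (hbounds : ((M : ℝ) - #(A \ subtreeIn par A v)) ^ ((1 : ℝ) / 4) ≤ #(subtreeIn par A v) ∧
      (#(subtreeIn par A v) : ℝ) ≤
        5 / 2 * Δ * ((M : ℝ) - #(A \ subtreeIn par A v)) ^ ((1 : ℝ) / 4)) :
    IsQuarterPartition hacyc Δ M A
      (Fin.snoc S (subtreeIn par A v) : Fin (k + 1) → Finset V) (Fin.snoc t v) := by
  have hold : ∀ i, t i = r ∨ cutSize (M - #A) < #(subtreeIn par A (t i)) := fun i =>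
    (h.root_or_large i).imp_right fun hi =>
      calc cutSize (M - #A) ≤ cutSize (M - #(A \ subtreeIn par A v)) :=
            cutSize_mono (Nat.sub_le_sub_left (card_le_card sdiff_subset) M)
        _ < #(subtreeIn par A (t i)) :=
            hi.trans_le (card_le_card (subtreeIn_mono sdiff_subset _))
  refine
    { toIsRootedPartition :=
        h.toIsRootedPartition.snoc (subtreeIn_subset A v) (hA.isRootedPiece_subtreeIn hv)
      depth_mono := ?_
      root_or_large := Fin.forall_fin_succ'.2 ⟨by simpa using hold, by simpa using .inr hlarge⟩
      card_bounds := Fin.forall_fin_succ'.2 ⟨?_, ?_⟩ }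
  · rw [Fin.comp_snoc]
    refine Fin.monotone_snoc h.depth_mono fun i => ?_
    rcases hold i with hi | hi
    · simp [hi, depth_root]
    · exact hdeepest _ hi
  · simpa [remaining_snoc_castSucc] using h.card_bounds
  · simpa [remaining_snoc_last, ← Nat.cast_sum, h.sum_card] using hbounds

end QuarterPartition

section Recursion

variable [Fintype V] [DecidableEq V] (hacyc : ∀ v : V, ∃ j, par^[j] v = r) {Δ M : ℕ}

lemma exists_cut_vertex_of_rpow_quarter_lt (hroot : par r = r) (hΔ : 2 ≤ Δ)
    (hdeg : ∀ v, #(children par v) + (if v = r then 0 else 1) ≤ Δ) (hA : ParentClosed par A)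
    (hr : r ∈ A) (hAM : #A < M) (hlarge : 5 / 2 * Δ * (M : ℝ) ^ ((1 : ℝ) / 4) < #A) :
    ∃ v ∈ A, v ≠ r ∧ cutSize (M - #A) < #(subtreeIn par A v) ∧
      #(subtreeIn par A v) ≤ 1 + Δ * cutSize (M - #A) ∧
      (M : ℝ) ^ ((1 : ℝ) / 4) + #(subtreeIn par A v) ≤ #A ∧
      ∀ w, cutSize (M - #A) < #(subtreeIn par A w) → depth hacyc w ≤ depth hacyc v := by
  have hB : 1 ≤ M - #A := by omega
  have hBM : ((M - #A : ℕ) : ℝ) ^ ((1 : ℝ) / 4) ≤ (M : ℝ) ^ ((1 : ℝ) / 4) :=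
    rpow_quarter_le_rpow_quarter (by positivity) (by exact_mod_cast Nat.sub_le M #A)
  have hΔ' : (2 : ℝ) ≤ Δ := by exact_mod_cast hΔ
  have hcA : 1 + Δ * cutSize (M - #A) < #A := by
    have := one_add_mul_cutSize_lt hΔ hB
    exact_mod_cast (by push_cast; nlinarith : ((1 + Δ * cutSize (M - #A) : ℕ) : ℝ) < #A)
  obtain ⟨v, hvA, hcut, hchildren, hdeepest⟩ :=
    exists_cut_vertex hacyc hroot hA hr (c := cutSize (M - #A)) (by nlinarith)
  have hsize := card_subtreeIn_add_le (hdeg v) hchildren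
  have hvr : v ≠ r := by
    rintro rfl
    rw [if_pos rfl, subtreeIn_root hacyc] at hsize
    omega
  rw [if_neg hvr] at hsize
  refine ⟨v, hvA, hvr, hcut, by omega, ?_, hdeepest⟩
  have := one_add_pred_mul_cutSize_add_le (Δ := Δ) (B := M - #A) (by omega)
    (one_le_rpow_quarter (x := M) (by exact_mod_cast (by omega : 1 ≤ M))) hBM
  have hsize' : (#(subtreeIn par A v) : ℝ) + cutSize (M - #A) ≤ 1 + Δ * cutSize (M - #A) := by
    exact_mod_cast hsize
  linarith

theorem exists_isQuarterPartition (hroot : par r = r) (hΔ : 2 ≤ Δ)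
    (hdeg : ∀ v, #(children par v) + (if v = r then 0 else 1) ≤ Δ) (A : Finset V)
    (hA : ParentClosed par A) (hr : r ∈ A) (hAM : #A < M) (hM : M ≤ #A ^ 4) :
    ∃ (k : ℕ) (S : Fin k → Finset V) (t : Fin k → V),
      IsQuarterPartition hacyc Δ M A S t := by
  induction A using Finset.strongInduction with
  | H A ih =>
  by_cases hsmall : (#A : ℝ) ≤ 5 / 2 * Δ * (M : ℝ) ^ ((1 : ℝ) / 4)
  · exact ⟨1, _, _, isQuarterPartition_single hacyc hA hr hM hsmall⟩
  push Not at hsmall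
  obtain ⟨v, hvA, hvr, hcut, hPle, hrest, hdeepest⟩ :=
    exists_cut_vertex_of_rpow_quarter_lt hacyc hroot hΔ hdeg hA hr hAM hsmall
  set P := subtreeIn par A v
  have hPA : P ⊆ A := subtreeIn_subset A v
  have hcard : (#(A \ P) : ℝ) = #A - #P := by
    rw [card_sdiff_of_subset hPA, Nat.cast_sub (card_le_card hPA)]
  have hrem : M ≤ #(A \ P) ^ 4 := by
    exact_mod_cast (rpow_quarter_le_iff (x := M) (y := #(A \ P)) (by positivity)
      (by positivity)).1 (by linarith)
  have hrP : r ∉ P := fun hrP => by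
    obtain ⟨-, j, hj⟩ := mem_subtreeIn.1 hrP
    rw [Function.iterate_fixed hroot] at hj
    exact hvr hj.symm
  have hvP : v ∈ P := mem_subtreeIn.2 ⟨hvA, 0, rfl⟩
  obtain ⟨k, S, t, h⟩ := ih (A \ P) (sdiff_ssubset hPA ⟨v, hvP⟩) (hA.sdiff_subtreeIn v)
    (mem_sdiff.2 ⟨hr, hrP⟩) ((card_le_card sdiff_subset).trans_lt hAM) hrem
  refine ⟨k + 1, _, _, h.snoc hacyc hA hvA hcut hdeepest ?_⟩
  have hbudget : ((M - #A : ℕ) : ℝ) + #P = M - #(A \ P) := by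
    rw [hcard, Nat.cast_sub hAM.le]
    ring
  rw [← hbudget]
  exact rpow_quarter_le_and_le_of_cutSize_lt hΔ (by omega) hcut hPle

end Recursion

end

theorem tree_partition_quarter_general {V : Type*} [Fintype V] [DecidableEq V]
    (n Δ n₀ : ℕ) (hΔ : 2 ≤ Δ) (hn₀ : n ≤ n₀) (hn₀' : n₀ < n ^ 4)
    (hcard : Fintype.card V = n)
    (r : V) (par : V → V) (hroot : par r = r)
    (hacyc : ∀ v : V, ∃ j : ℕ, par^[j] v = r)
    (hdeg : ∀ v : V,
      (Finset.univ.filter (fun u => u ≠ v ∧ par u = v)).card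
        + (if v = r then 0 else 1) ≤ Δ) :
    ∃ (k : ℕ) (S : Fin k → Finset V) (tt : Fin k → V),
      (∀ v : V, ∃ i, v ∈ S i) ∧
      (∀ i j, i ≠ j → Disjoint (S i) (S j)) ∧
      (∀ i, tt i ∈ S i) ∧
      (∀ i, ∀ v ∈ S i, v ≠ tt i → par v ∈ S i) ∧
      (∀ i, ∀ v ∈ S i, ∃ j : ℕ, par^[j] v = tt i) ∧
      (∀ i j, i ≤ j → Nat.find (hacyc (tt i)) ≤ Nat.find (hacyc (tt j))) ∧
      (∀ i : Fin k,
        ((n₀ : ℝ) - ∑ j ∈ Finset.univ.filter (fun j => j < i), ((S j).card : ℝ) + 1)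
            ^ ((1 : ℝ) / 4) ≤ ((S i).card : ℝ) ∧
        ((S i).card : ℝ) ≤ (5 / 2) * Δ *
          ((n₀ : ℝ) - ∑ j ∈ Finset.univ.filter (fun j => j < i), ((S j).card : ℝ) + 1)
            ^ ((1 : ℝ) / 4)) := by
  have hn : #(univ : Finset V) = n := by rw [card_univ, hcard]
  obtain ⟨k, S, t, h⟩ := exists_isQuarterPartition (M := n₀ + 1) hacyc hroot hΔ hdeg univ
    (fun v _ => mem_univ (par v)) (mem_univ r) (by omega) (by rw [hn]; omega)
  refine ⟨k, S, t, fun v => h.cover v (mem_univ v), h.disjoint, fun i => (h.piece i).1,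
    fun i => (h.piece i).2.1, fun i => (h.piece i).2.2, fun i j hij => h.depth_mono hij,
    fun i => ?_⟩
  have hrem : (n₀ : ℝ) - ∑ j ∈ univ.filter (· < i), (#(S j) : ℝ) + 1 =
      remaining (n₀ + 1) S i := by
    rw [filter_gt_eq_Iio, remaining]
    push_cast
    ring
  rw [hrem]
  exact h.card_bounds i

/-- Modified tree partition lemma (Lemma 3.4).  A rooted tree `(T, r)` on `n` vertices with
maximum degree at most `Δ` can, for any `n₀` with `n ≤ n₀ < n⁴`, be partitioned into
pairwise disjoint rooted subtrees `(T_1, t_1), …, (T_k, t_k)` with `T_i ⊆ T(t_i)`, the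
depths of the roots non-decreasing, and `n_{i-1}^{1/4} ≤ |T_i| ≤ (5/2) Δ n_{i-1}^{1/4}`,
where `n_i := n₀ - |T_1 ∪ … ∪ T_i| + 1`.

The encoding of rooted trees via the parent function `par` is as in the tree partition
lemma; since the `S i` are pairwise disjoint, `|T_1 ∪ … ∪ T_i| = ∑_{j ≤ i} |S j|`. -/
theorem tree_partition_quarter {V : Type*} [Fintype V] [DecidableEq V]
    (n Δ n₀ : ℕ) (hn : 2 ≤ n) (hΔ : 2 ≤ Δ) (hn₀ : n ≤ n₀) (hn₀' : n₀ < n ^ 4)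
    (hcard : Fintype.card V = n)
    (r : V) (par : V → V) (hroot : par r = r)
    (hacyc : ∀ v : V, ∃ j : ℕ, par^[j] v = r)
    (hdeg : ∀ v : V,
      (Finset.univ.filter (fun u => u ≠ v ∧ par u = v)).card
        + (if v = r then 0 else 1) ≤ Δ) :
    ∃ (k : ℕ) (S : Fin k → Finset V) (tt : Fin k → V),
      (∀ v : V, ∃ i, v ∈ S i) ∧
      (∀ i j, i ≠ j → Disjoint (S i) (S j)) ∧
      (∀ i, tt i ∈ S i) ∧
      (∀ i, ∀ v ∈ S i, v ≠ tt i → par v ∈ S i) ∧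
      (∀ i, ∀ v ∈ S i, ∃ j : ℕ, par^[j] v = tt i) ∧
      (∀ i j, i ≤ j → Nat.find (hacyc (tt i)) ≤ Nat.find (hacyc (tt j))) ∧
      (∀ i : Fin k,
        ((n₀ : ℝ) - ∑ j ∈ Finset.univ.filter (fun j => j < i), ((S j).card : ℝ) + 1)
            ^ ((1 : ℝ) / 4) ≤ ((S i).card : ℝ) ∧
        ((S i).card : ℝ) ≤ (5 / 2) * Δ *
          ((n₀ : ℝ) - ∑ j ∈ Finset.univ.filter (fun j => j < i), ((S j).card : ℝ) + 1)
            ^ ((1 : ℝ) / 4)) :=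
  tree_partition_quarter_general n Δ n₀ hΔ hn₀ hn₀' hcard r par hroot hacyc hdeg
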